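/- Conservation of the spectral L² norm for the truncated vorticity equation: let K ⊂ ℤ² \ {0} be a finite set symmetric under k ↦ −k, and let ω_k(t) ∈ ℂ solve dω_k/dt = Σ_{p+q=k, p,q ∈ K} (p×q)_z · ω_q ψ_p with ψ_k = −ω_k/|k|², subject to the reality condition ω_{−k} = ω_k*. Then d/dt Σ_{k∈K} |ω_k|² = 0. -/

import Mathlib

/-!
By the reality condition `conj ω_k = ω_{-k}`, the time derivative of `Σ_k |ω_k|²` is
`2 Re Σ_k ω_{-k} ω̇_k`. Inserting the equation of motion turns this into a sum over triads
`p + q = k`, and for each fixed `p` the involution `q ↦ -(p + q)` maps the term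
`(p × q) ω_{-(p+q)} ω_q ψ_p` to its negative, because `p × (-(p + q)) = -(p × q)`.
-/

open Finset ComplexConjugate

theorem Finset.sum_eq_zero_of_involution_neg {ι G : Type*}
    [AddCommGroup G] [IsAddTorsionFree G]
    {s : Finset ι} {f : ι → G} (g : ι → ι) (hf : ∀ a ∈ s, f (g a) = -f a)
    (g_mem : ∀ a ∈ s, g a ∈ s) (hg : ∀ a ∈ s, g (g a) = a) : ∑ a ∈ s, f a = 0 :=
  sum_involution (fun a _ => g a) (fun a ha => by rw [hf a ha, add_neg_cancel])
    (fun a ha hfa hfix => hfa (self_eq_neg.1 (by rw [← hf a ha, hfix]))) g_mem hg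

theorem hasDerivAt_sum_norm_sq {ι : Type*} (K : Finset ι) {f : ℝ → ι → ℂ} {f' : ι → ℂ}
    {t : ℝ}
    (hf : ∀ k ∈ K, HasDerivAt (fun s => f s k) (f' k) t) :
    HasDerivAt (fun s => ∑ k ∈ K, ‖f s k‖ ^ 2) (2 * (∑ k ∈ K, conj (f t k) * f' k).re) t := by
  refine (HasDerivAt.fun_sum fun k hk => (hf k hk).norm_sq).congr_deriv ?_
  simp only [Complex.inner, Complex.re_sum, mul_sum, mul_comm]

def cross (p q : ℤ × ℤ) : ℤ := p.1 * q.2 - p.2 * q.1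

theorem cross_neg_add_right (p q : ℤ × ℤ) : cross p (-(p + q)) = -cross p q := by
  simp only [cross, Prod.fst_neg, Prod.snd_neg, Prod.fst_add, Prod.snd_add]
  ring

def galerkinAdvection {R : Type*} [CommRing R] (K : Finset (ℤ × ℤ)) (w ψ : ℤ × ℤ → R)
    (k : ℤ × ℤ) : R :=
  ∑ p ∈ K, ∑ q ∈ K, if p + q = k then (cross p q : R) * w q * ψ p else 0

theorem sum_mul_galerkinAdvection_eq_zero {R : Type*} [CommRing R] [IsAddTorsionFree R]
    {K : Finset (ℤ × ℤ)} (hK : ∀ k ∈ K, -k ∈ K) (w ψ : ℤ × ℤ → R) :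
    ∑ k ∈ K, w (-k) * galerkinAdvection K w ψ k = 0 := by
  simp only [galerkinAdvection, mul_sum, mul_ite, mul_zero]
  rw [sum_comm]
  refine sum_eq_zero fun p _ => ?_
  rw [sum_comm]
  simp only [sum_ite_eq]
  rw [← sum_filter]
  have hcancel (q : ℤ × ℤ) : p + -(p + q) = -q := by abel
  refine sum_eq_zero_of_involution_neg (fun q => -(p + q)) (fun q _ => ?_) (fun q hq => ?_)
    (fun q _ => by simp only [hcancel, neg_neg])
  · simp only [hcancel, neg_neg, cross_neg_add_right, Int.cast_neg]
    ring
  · obtain ⟨hqK, hpqK⟩ := mem_filter.1 hq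
    exact mem_filter.2 ⟨hK _ hpqK, by simpa only [hcancel] using hK _ hqK⟩

theorem stmt14_general
    (K : Finset (ℤ × ℤ))
    (hKsymm : ∀ k ∈ K, -k ∈ K)
    (ω : ℝ → ℤ × ℤ → ℂ)
    (hdiff : ∀ k : ℤ × ℤ, Differentiable ℝ (fun t => ω t k))
    (hreal : ∀ t : ℝ, ∀ k ∈ K, ω t (-k) = (starRingEnd ℂ) (ω t k))
    (hode : ∀ t : ℝ, ∀ k ∈ K,
      deriv (fun s => ω s k) t
        = ∑ p ∈ K, ∑ q ∈ K,
            if p + q = k then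
              ((p.1 * q.2 - p.2 * q.1 : ℤ) : ℂ) * ω t q *
                (-(ω t p) / ((p.1 ^ 2 + p.2 ^ 2 : ℤ) : ℂ))
            else 0) :
    ∀ t : ℝ, deriv (fun s => ∑ k ∈ K, ‖ω s k‖ ^ 2) t = 0 := by
  intro t
  set ψ : ℤ × ℤ → ℂ := fun p => -(ω t p) / ((p.1 ^ 2 + p.2 ^ 2 : ℤ) : ℂ)
  have hflux : ∑ k ∈ K, conj (ω t k) * deriv (fun s => ω s k) t
      = ∑ k ∈ K, ω t (-k) * galerkinAdvection K (ω t) ψ k :=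
    sum_congr rfl fun k hk => by rw [hreal t k hk, hode t k hk]; rfl
  rw [(hasDerivAt_sum_norm_sq K fun k _ => (hdiff k t).hasDerivAt).deriv, hflux,
    sum_mul_galerkinAdvection_eq_zero hKsymm, Complex.zero_re, mul_zero]

/-- Conservation of the spectral L² norm for the Fourier–Galerkin truncated 2D vorticity
equation: for a finite set `K ⊂ ℤ² \ {0}` symmetric under `k ↦ −k`, if the modes `ω k`
solve `dω_k/dt = Σ_{p+q=k, p,q∈K} (p×q)_z ω_q ψ_p` with `ψ_p = −ω_p/|p|²` and satisfy the
reality condition `ω_{−k} = ω_k*`, then `d/dt Σ_{k∈K} |ω_k|² = 0`. -/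
theorem stmt14
    (K : Finset (ℤ × ℤ)) (hK0 : ((0 : ℤ), (0 : ℤ)) ∉ K)
    (hKsymm : ∀ k ∈ K, -k ∈ K)
    (ω : ℝ → ℤ × ℤ → ℂ)
    (hdiff : ∀ k : ℤ × ℤ, Differentiable ℝ (fun t => ω t k))
    (hreal : ∀ t : ℝ, ∀ k ∈ K, ω t (-k) = (starRingEnd ℂ) (ω t k))
    (hode : ∀ t : ℝ, ∀ k ∈ K,
      deriv (fun s => ω s k) t
        = ∑ p ∈ K, ∑ q ∈ K,
            if p + q = k then
              ((p.1 * q.2 - p.2 * q.1 : ℤ) : ℂ) * ω t q *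
                (-(ω t p) / ((p.1 ^ 2 + p.2 ^ 2 : ℤ) : ℂ))
            else 0) :
    ∀ t : ℝ, deriv (fun s => ∑ k ∈ K, ‖ω s k‖ ^ 2) t = 0 :=
  stmt14_general K hKsymm ω hdiff hreal hode
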